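/- (Equivariance of adaptive phase selection probabilities.) Let f be any real-valued function on coarse-grid signals (functions ZMod n₁ × ZMod n₂ × ZMod n₃ → ℝ) that is invariant under all circular translations of the coarse grid, i.e., f(T_h Y) = f(Y) for every h and Y. Define the selection probabilities p(k | X) = exp(f(Ψ(X)_k)) / Σ_j exp(f(Ψ(X)_j)), the sum running over all phases j. Then for every volume X, all integers g = (g₁,g₂,g₃), and every phase k = (p,q,r), one has p(k ⊕ g | T_g X) = p(k | X), where k ⊕ g denotes the phase ((p+g₁) mod s₁, (q+g₂) mod s₂, (r+g₃) mod s₃). -/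

import Mathlib

noncomputable section

open scoped BigOperators

/-- The well-defined map `ZMod n → ZMod (n*s)` induced by `a ↦ s*a + p`. -/
def phaseEmb (n s : ℕ) (p : ℤ) (i : ZMod n) : ZMod (n * s) :=
  (s : ZMod (n * s)) * (i.val : ZMod (n * s)) + (p : ZMod (n * s))

/-- Circular translation of a volume by an integer vector `g`:
`(T_g X)(i,j,k) = X(i-g₁, j-g₂, k-g₃)`. -/
def Tvol {D H W : ℕ} (g : ℤ × ℤ × ℤ) (X : ZMod D × ZMod H × ZMod W → ℝ) :
    ZMod D × ZMod H × ZMod W → ℝ :=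
  fun v => X (v.1 - (g.1 : ZMod D), v.2.1 - (g.2.1 : ZMod H), v.2.2 - (g.2.2 : ZMod W))

/-- Circular translation on the coarse grid. -/
def Tcoarse {n₁ n₂ n₃ : ℕ} (h : ℤ × ℤ × ℤ) (Y : ZMod n₁ × ZMod n₂ × ZMod n₃ → ℝ) :
    ZMod n₁ × ZMod n₂ × ZMod n₃ → ℝ :=
  fun v => Y (v.1 - (h.1 : ZMod n₁), v.2.1 - (h.2.1 : ZMod n₂), v.2.2 - (h.2.2 : ZMod n₃))

/-- Polyphase component `Ψ(X)_{(p,q,r)}(i,j,k) = X(s₁·i+p, s₂·j+q, s₃·k+r)`,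
for a phase indexed by `Fin s₁ × Fin s₂ × Fin s₃`. -/
def Psi (s₁ s₂ s₃ n₁ n₂ n₃ : ℕ) (k : Fin s₁ × Fin s₂ × Fin s₃)
    (X : ZMod (n₁ * s₁) × ZMod (n₂ * s₂) × ZMod (n₃ * s₃) → ℝ) :
    ZMod n₁ × ZMod n₂ × ZMod n₃ → ℝ :=
  fun v => X (phaseEmb n₁ s₁ (k.1 : ℤ) v.1, phaseEmb n₂ s₂ (k.2.1 : ℤ) v.2.1,
              phaseEmb n₃ s₃ (k.2.2 : ℤ) v.2.2)

/-- Selection probabilities `p(k | X) = exp(f(Ψ(X)_k)) / Σ_j exp(f(Ψ(X)_j))`. -/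
noncomputable def selProb (s₁ s₂ s₃ n₁ n₂ n₃ : ℕ)
    (f : (ZMod n₁ × ZMod n₂ × ZMod n₃ → ℝ) → ℝ)
    (k : Fin s₁ × Fin s₂ × Fin s₃)
    (X : ZMod (n₁ * s₁) × ZMod (n₂ * s₂) × ZMod (n₃ * s₃) → ℝ) : ℝ :=
  Real.exp (f (Psi s₁ s₂ s₃ n₁ n₂ n₃ k X)) /
    ∑ j : Fin s₁ × Fin s₂ × Fin s₃, Real.exp (f (Psi s₁ s₂ s₃ n₁ n₂ n₃ j X))

/-- Shift of a phase component by an integer, modulo the patch size. -/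
def phAdd {s : ℕ} [NeZero s] (p : Fin s) (g : ℤ) : Fin s :=
  ⟨(((p : ℤ) + g) % (s : ℤ)).toNat, by
    have hs : (0 : ℤ) < (s : ℤ) := by
      exact_mod_cast Nat.pos_of_ne_zero (NeZero.ne s)
    have h1 := Int.emod_nonneg ((p : ℤ) + g) hs.ne'
    have h2 := Int.emod_lt_of_pos ((p : ℤ) + g) hs
    omega⟩

/-- Componentwise shift of a phase triple by an integer vector:
`k ⊕ g = ((p+g₁) mod s₁, (q+g₂) mod s₂, (r+g₃) mod s₃)`. -/
def phAdd3 {s₁ s₂ s₃ : ℕ} [NeZero s₁] [NeZero s₂] [NeZero s₃]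
    (k : Fin s₁ × Fin s₂ × Fin s₃) (g : ℤ × ℤ × ℤ) : Fin s₁ × Fin s₂ × Fin s₃ :=
  (phAdd k.1 g.1, phAdd k.2.1 g.2.1, phAdd k.2.2 g.2.2)

/-!
Translating the volume by `g` permutes its polyphase components: component `k ⊕ g` of `T_g X` is
component `k` of `X`, translated on the coarse grid by the carry `⌊(k + g) / s⌋`. A
translation-invariant score thus takes the same value on both, so the softmax over phases is
merely reindexed by the bijection `k ↦ k ⊕ g`.
-/

lemma coe_phAdd {s : ℕ} [NeZero s] (p : Fin s) (g : ℤ) :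
    ((phAdd p g : Fin s) : ℤ) = ((p : ℤ) + g) % s :=
  Int.toNat_of_nonneg (Int.emod_nonneg _ (Int.natCast_ne_zero.mpr (NeZero.ne s)))

lemma phAdd_phAdd {s : ℕ} [NeZero s] (p : Fin s) (g g' : ℤ) :
    phAdd (phAdd p g) g' = phAdd p (g + g') := by
  apply Fin.ext
  zify
  rw [coe_phAdd, coe_phAdd, coe_phAdd, Int.emod_add_emod, add_assoc]

lemma phAdd_zero {s : ℕ} [NeZero s] (p : Fin s) : phAdd p 0 = p := by
  apply Fin.ext
  zify
  rw [coe_phAdd, add_zero]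
  exact Int.emod_eq_of_lt (by positivity) (by exact_mod_cast p.isLt)

def phAddEquiv {s : ℕ} [NeZero s] (g : ℤ) : Fin s ≃ Fin s where
  toFun p := phAdd p g
  invFun p := phAdd p (-g)
  left_inv p := by simp only [phAdd_phAdd, add_neg_cancel, phAdd_zero]
  right_inv p := by simp only [phAdd_phAdd, neg_add_cancel, phAdd_zero]

def phAdd3Equiv {s₁ s₂ s₃ : ℕ} [NeZero s₁] [NeZero s₂] [NeZero s₃] (g : ℤ × ℤ × ℤ) :
    Fin s₁ × Fin s₂ × Fin s₃ ≃ Fin s₁ × Fin s₂ × Fin s₃ :=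
  (phAddEquiv g.1).prodCongr ((phAddEquiv g.2.1).prodCongr (phAddEquiv g.2.2))

lemma phAdd3Equiv_apply {s₁ s₂ s₃ : ℕ} [NeZero s₁] [NeZero s₂] [NeZero s₃]
    (g : ℤ × ℤ × ℤ) (k : Fin s₁ × Fin s₂ × Fin s₃) : phAdd3Equiv g k = phAdd3 k g :=
  rfl

lemma phaseEmb_intCast (n s : ℕ) [NeZero n] (p a : ℤ) :
    phaseEmb n s p a = s * a + p := by
  have hval : ((a : ZMod n).val : ℤ) ≡ a [ZMOD n] := by
    rw [ZMod.val_intCast]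
    exact Int.mod_modEq a n
  have hmul : (((a : ZMod n).val * s : ℤ) : ZMod (n * s)) = ((a * s : ℤ) : ZMod (n * s)) :=
    (ZMod.intCast_eq_intCast_iff _ _ _).mpr (by exact_mod_cast hval.mul_right' (c := s))
  push_cast at hmul
  rw [phaseEmb]
  linear_combination hmul

lemma phaseEmb_emod_sub (n s : ℕ) [NeZero n] (p g : ℤ) (i : ZMod n) :
    phaseEmb n s ((p + g) % s) i - g = phaseEmb n s p (i - ((p + g) / s : ℤ)) := by
  obtain ⟨a, rfl⟩ := ZMod.intCast_surjective i
  rw [← Int.cast_sub, phaseEmb_intCast, phaseEmb_intCast, Int.emod_def]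
  push_cast
  ring

lemma Psi_phAdd3_Tvol (s₁ s₂ s₃ n₁ n₂ n₃ : ℕ)
    [NeZero s₁] [NeZero s₂] [NeZero s₃] [NeZero n₁] [NeZero n₂] [NeZero n₃]
    (g : ℤ × ℤ × ℤ) (k : Fin s₁ × Fin s₂ × Fin s₃)
    (X : ZMod (n₁ * s₁) × ZMod (n₂ * s₂) × ZMod (n₃ * s₃) → ℝ) :
    Psi s₁ s₂ s₃ n₁ n₂ n₃ (phAdd3 k g) (Tvol g X)
      = Tcoarse (((k.1 : ℤ) + g.1) / s₁, ((k.2.1 : ℤ) + g.2.1) / s₂, ((k.2.2 : ℤ) + g.2.2) / s₃)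
          (Psi s₁ s₂ s₃ n₁ n₂ n₃ k X) := by
  funext v
  simp only [Psi, Tvol, Tcoarse, phAdd3, coe_phAdd, phaseEmb_emod_sub]

lemma exp_div_sum_exp_comp_equiv {ι κ : Type*} [Fintype ι] [Fintype κ] (e : ι ≃ κ)
    (u : κ → ℝ) (v : ι → ℝ) (h : ∀ j, u (e j) = v j) (k : ι) :
    Real.exp (u (e k)) / ∑ j, Real.exp (u j) = Real.exp (v k) / ∑ j, Real.exp (v j) := by
  simp only [← e.sum_comp, h]

/-- **Equivariance of adaptive phase selection probabilities.**
If the scoring functional `f` is invariant under all circular translations of the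
coarse grid, then `p(k ⊕ g | T_g X) = p(k | X)` for every volume `X`, every
translation `g`, and every phase `k`. -/
theorem selection_probability_equivariance
    (s₁ s₂ s₃ n₁ n₂ n₃ : ℕ)
    [NeZero s₁] [NeZero s₂] [NeZero s₃] [NeZero n₁] [NeZero n₂] [NeZero n₃]
    (f : (ZMod n₁ × ZMod n₂ × ZMod n₃ → ℝ) → ℝ)
    (hf : ∀ (h : ℤ × ℤ × ℤ) (Y : ZMod n₁ × ZMod n₂ × ZMod n₃ → ℝ),
      f (Tcoarse h Y) = f Y)
    (X : ZMod (n₁ * s₁) × ZMod (n₂ * s₂) × ZMod (n₃ * s₃) → ℝ)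
    (g₁ g₂ g₃ : ℤ) (k : Fin s₁ × Fin s₂ × Fin s₃) :
    selProb s₁ s₂ s₃ n₁ n₂ n₃ f (phAdd3 k (g₁, g₂, g₃)) (Tvol (g₁, g₂, g₃) X)
      = selProb s₁ s₂ s₃ n₁ n₂ n₃ f k X := by
  have hscore : ∀ j, f (Psi s₁ s₂ s₃ n₁ n₂ n₃ (phAdd3Equiv (g₁, g₂, g₃) j) (Tvol (g₁, g₂, g₃) X))
      = f (Psi s₁ s₂ s₃ n₁ n₂ n₃ j X) := fun j => by
    rw [phAdd3Equiv_apply, Psi_phAdd3_Tvol, hf]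
  exact exp_div_sum_exp_comp_equiv (phAdd3Equiv (g₁, g₂, g₃))
    (fun j => f (Psi s₁ s₂ s₃ n₁ n₂ n₃ j (Tvol (g₁, g₂, g₃) X))) _ hscore k
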